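/- arXiv:1206.5049 — 4 statements merged into one kernel-verified Lean document; each statement's English description precedes it below -/
import Mathlib

section
/- In the lattice with basis H, L, M and Gram matrix [[4,1,1],[1,-2,0],[1,0,-2]], the element w = 4H - 3L - 3M satisfies (w,w)=-20, and the orthogonal reflection x ↦ x + (1/10)·(x,w)·w preserves the lattice. -/
/-- Bilinear form with Gram matrix [[4,1,1],[1,-2,0],[1,0,-2]] in the basis H, L, M. -/
def B (x y : Fin 3 → ℤ) : ℤ :=
  4 * x 0 * y 0 - 2 * x 1 * y 1 - 2 * x 2 * y 2
    + x 0 * y 1 + x 1 * y 0 + x 0 * y 2 + x 2 * y 0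

theorem reflection_in_w_preserves_lattice :
    let w : Fin 3 → ℤ := ![4, -3, -3]   -- 4H - 3L - 3M
    B w w = -20 ∧
    ∀ x : Fin 3 → ℤ, ∃ y : Fin 3 → ℤ,
      ∀ i, (10 : ℤ) * y i = 10 * x i + B x w * w i := by
  intro w
  refine ⟨by decide, fun x => ⟨fun i => x i + (x 0 + x 1 + x 2) * w i, fun i => ?_⟩⟩
  have : B x w = 10 * (x 0 + x 1 + x 2) := by simp [B, w]; ring
  rw [this]; ring
end

section
/- The only triples of integers (x,y,z) with x > 0 satisfying 4x^2 - 2y^2 - 2z^2 + 2xy + 2xz = 4 together with the inequalities -x ≤ y, -x ≤ z, 2y ≤ x, 2z ≤ x, and -x ≤ y + z are (x,y,z) ∈ {(1,0,0), (2,-1,-1), (3,-3,1), (3,1,-3)}. -/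
private lemma aux_bound (x y z : ℤ) (hx : 0 < x)
    (heq : 4 * x ^ 2 - 2 * y ^ 2 - 2 * z ^ 2 + 2 * x * y + 2 * x * z = 4)
    (h1 : -x ≤ y) (h2 : -x ≤ z) (h3 : 2 * y ≤ x) (h4 : 2 * z ≤ x)
    (h5 : -x ≤ y + z) (hyz : y ≤ z) (hx5 : 5 ≤ x) : False := by
  rcases eq_or_lt_of_le h1 with hcase | hcase
  · -- y = -x
    have hy : y = -x := hcase.symm
    subst hy
    have hz0 : 0 ≤ z := by omega
    have hxz : 3 ≤ x - z := by omega
    have h3z : 3 * z ≤ 2 := by nlinarith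
    have hz : z = 0 := by omega
    subst hz
    nlinarith
  · -- -x < y
    set a := x - 2 * y with ha
    set b := x - 2 * z with hb
    have hb0 : 0 ≤ b := by omega
    have hab : b ≤ a := by omega
    have ha3 : a ≤ 3 * x - 2 := by omega
    have habs : a + b ≤ 4 * x := by omega
    have heq2 : a ^ 2 + b ^ 2 = 10 * x ^ 2 - 8 := by ring_nf; nlinarith [heq]
    have ha2x : 2 * x ≤ a := by
      by_contra h
      push_neg at h
      nlinarith [mul_nonneg hb0 hb0, mul_nonneg (by linarith : (0:ℤ) ≤ a - b) (by linarith : (0:ℤ) ≤ a + b)]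
    nlinarith [mul_nonneg (by linarith : (0:ℤ) ≤ 4*x - a - b) (by linarith : (0:ℤ) ≤ 4*x - a + b),
               mul_nonneg (by linarith : (0:ℤ) ≤ a - x - 5) (by linarith : (0:ℤ) ≤ 3*x - a - 2)]

theorem degree_four_classes_in_fundamental_domain (x y z : ℤ) (hx : 0 < x) :
    (4 * x ^ 2 - 2 * y ^ 2 - 2 * z ^ 2 + 2 * x * y + 2 * x * z = 4 ∧
      -x ≤ y ∧ -x ≤ z ∧ 2 * y ≤ x ∧ 2 * z ≤ x ∧ -x ≤ y + z)
      ↔ ((x, y, z) = (1, 0, 0) ∨ (x, y, z) = (2, -1, -1) ∨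
         (x, y, z) = (3, -3, 1) ∨ (x, y, z) = (3, 1, -3)) := by
  constructor
  · rintro ⟨heq, h1, h2, h3, h4, h5⟩
    have hx4 : x ≤ 4 := by
      by_contra h
      push_neg at h
      rcases le_total y z with hyz | hyz
      · exact aux_bound x y z hx heq h1 h2 h3 h4 h5 hyz (by omega)
      · exact aux_bound x z y hx (by linarith) h2 h1 h4 h3 (by omega) hyz (by omega)
    have heq' : 4*x*x - 2*y*y - 2*z*z + 2*x*y + 2*x*z = 4 := by nlinarith [heq]
    have hy1 : -4 ≤ y := by omega
    have hy2 : y ≤ 2 := by omega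
    have hz1 : -4 ≤ z := by omega
    have hz2 : z ≤ 2 := by omega
    simp only [Prod.mk.injEq]
    interval_cases x <;> interval_cases y <;> interval_cases z <;> omega
  · rintro (h | h | h | h) <;> (simp only [Prod.mk.injEq] at h; obtain ⟨rfl, rfl, rfl⟩ := h) <;> norm_num
end

section
/- Let ℓ > 5 be an integer and let N' be the rank-2 lattice with Gram matrix [[4,4ℓ],[4ℓ,4]] with basis h_1, h_2. Suppose c, h are elements of N' with (h,h) = 4, c and h linearly independent over Z, (c,c) ≥ 0, and 0 < (c,h) < 16. Then the determinant of the Gram matrix of the sublattice generated by c and h, namely (c,h)^2 - 4(c,c), is a positive integer strictly less than 256 that must be divisible by 16ℓ^2 - 16 > 256, a contradiction; hence no such c exists. Equivalently: every c in the lattice with (c,c) ≥ 0 and 0 < (c,h) < 16 is a rational multiple of h. -/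
/-
For the sublattice spanned by `c` and `h`, the Gram determinant `(c,c)(h,h) - (c,h)²` equals the
discriminant `16 - 16ℓ²` of `N'` times the square of the index `c₀h₁ - c₁h₀`. The bounds on `c`
make `(c,h)² - 4(c,c)` lie below `256 < 16ℓ² - 16`, so the index vanishes and `c`, `h` are
proportional.
-/

/-- Bilinear form with Gram matrix [[4,4ℓ],[4ℓ,4]] in the basis h₁, h₂. -/
def B2 (ℓ : ℤ) (x y : Fin 2 → ℤ) : ℤ :=
  4 * x 0 * y 0 + 4 * ℓ * (x 0 * y 1 + x 1 * y 0) + 4 * x 1 * y 1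

theorem B2_gram_det (ℓ : ℤ) (c h : Fin 2 → ℤ) :
    B2 ℓ c c * B2 ℓ h h - B2 ℓ c h ^ 2 = (16 - 16 * ℓ ^ 2) * (c 0 * h 1 - c 1 * h 0) ^ 2 := by
  simp only [B2]
  ring

theorem ne_zero_of_B2_self_ne_zero {ℓ : ℤ} {h : Fin 2 → ℤ} (hh : B2 ℓ h h ≠ 0) : h ≠ 0 := by
  rintro rfl
  simp [B2] at hh

theorem exists_eq_smul_of_cross_eq_zero {K : Type*} [Field K] {c h : Fin 2 → K} (hh : h ≠ 0)
    (hcross : c 0 * h 1 = c 1 * h 0) : ∃ q : K, c = q • h := by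
  by_cases h0 : h 0 = 0
  · have h1 : h 1 ≠ 0 := fun h1 => hh (funext fun i => by fin_cases i <;> assumption)
    refine ⟨c 1 / h 1, funext fun i => ?_⟩
    fin_cases i
    · have : c 0 = 0 := by simpa [h0, h1] using hcross
      simp [this, h0]
    · simp [h1]
  · refine ⟨c 0 / h 0, funext fun i => ?_⟩
    fin_cases i
    · simp [h0]
    · simp only [Pi.smul_apply, smul_eq_mul]
      field_simp
      exact hcross.symm

theorem low_degree_curve_is_rational_multiple (ℓ : ℤ) (hℓ : 5 < ℓ)
    (c h : Fin 2 → ℤ) (hh : B2 ℓ h h = 4) (hc : 0 ≤ B2 ℓ c c)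
    (hch₀ : 0 < B2 ℓ c h) (hch : B2 ℓ c h < 16) :
    ∃ q : ℚ, ∀ i, (c i : ℚ) = q * (h i : ℚ) := by
  set d := c 0 * h 1 - c 1 * h 0 with hd
  have hgram := B2_gram_det ℓ c h
  rw [hh, ← hd] at hgram
  have hdisc : 256 < 16 * ℓ ^ 2 - 16 := by nlinarith
  have hindex : (16 * ℓ ^ 2 - 16) * d ^ 2 < 256 := by nlinarith
  have hcross : d = 0 := by
    by_contra hne
    have : 0 < d ^ 2 := by positivity
    nlinarith
  have hne : h ≠ 0 := ne_zero_of_B2_self_ne_zero (ℓ := ℓ) (by rw [hh]; norm_num)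
  obtain ⟨q, hq⟩ := exists_eq_smul_of_cross_eq_zero (K := ℚ) (c := (↑) ∘ c) (h := (↑) ∘ h)
    (fun h' => hne (funext fun i => by simpa using congrFun h' i))
    (by simp only [Function.comp_apply]; exact_mod_cast sub_eq_zero.mp hcross)
  exact ⟨q, fun i => congrFun hq i⟩
end

section
/- Let G be a subgroup of the multiplicative group of positive real numbers such that every element of G is a root of a monic quadratic t^2 - a t + 1 with a ∈ Z, and G ≠ {1}. Then G is infinite cyclic: G ≅ Z. -/
/-!
A root `g > 0` of `t ^ 2 - a t + 1` satisfies `g + g⁻¹ = a`, and for `1 < g < 2` the left side lies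
strictly between `2` and `3`. Hence `G` avoids the interval `(1, 2)`; a subgroup of an archimedean
ordered group that is isolated from `1` is cyclic, and a nontrivial cyclic ordered group is `ℤ`.
-/

open Set

instance Positive.instMulArchimedean {K : Type*} [Field K] [LinearOrder K] [IsStrictOrderedRing K]
    [Archimedean K] : MulArchimedean {x : K // 0 < x} where
  arch x y hy := by
    obtain ⟨n, hn⟩ := pow_unbounded_of_one_lt (x : K) (Subtype.coe_lt_coe.mpr hy)
    exact ⟨n, Subtype.coe_le_coe.mp (by simpa using hn.le)⟩

lemma notMem_Ioo_one_two_of_sq_sub_intCast_mul_add_one_eq_zero {K : Type*} [Field K]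
    [LinearOrder K] [IsStrictOrderedRing K] {x : K} {a : ℤ} (h : x ^ 2 - a * x + 1 = 0) :
    x ∉ Ioo 1 2 := by
  rintro ⟨one_lt, lt_two⟩
  have two_lt_a : (2 : K) < a := by nlinarith
  have a_lt_three : (a : K) < 3 := by nlinarith
  have : (2 : ℤ) < a := by exact_mod_cast two_lt_a
  have : a < 3 := by exact_mod_cast a_lt_three
  omega

theorem subgroup_of_quadratic_units_is_infinite_cyclic
    (G : Subgroup {x : ℝ // 0 < x})
    (hquad : ∀ g ∈ G, ∃ a : ℤ, ((g : ℝ)) ^ 2 - (a : ℝ) * (g : ℝ) + 1 = 0)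
    (hne : G ≠ ⊥) :
    Nonempty (G ≃* Multiplicative ℤ) := by
  let two : {x : ℝ // 0 < x} := ⟨2, two_pos⟩
  have one_lt_two : 1 < two := Subtype.coe_lt_coe.mp one_lt_two
  have isolated : Disjoint (G : Set {x : ℝ // 0 < x}) (Ioo 1 two) :=
    disjoint_left.mpr fun g hg ↦
      let ⟨_, ha⟩ := hquad g hg
      notMem_Ioo_one_two_of_sq_sub_intCast_mul_add_one_eq_zero ha
  obtain ⟨b, rfl⟩ := Subgroup.cyclic_of_isolated_one one_lt_two isolated
  have : Nontrivial (Subgroup.closure {b}) := (Subgroup.nontrivial_iff_ne_bot _).mpr hne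
  have cyclic : IsCyclic (Subgroup.closure {b}) := by
    rw [← Subgroup.zpowers_eq_closure]; infer_instance
  exact (LinearOrderedCommGroup.isCyclic_iff_nonempty_equiv_int.mp cyclic).map
    OrderMonoidIso.toMulEquiv
end
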